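/- arXiv:1707.01787 — 4 statements merged into one kernel-verified Lean document; each statement's English description precedes it below -/
import Mathlib

section
/- The category of group-like graphs is equivalent to the category of augmented racks, where a group-like graph (G, A, s, t) is sent to the augmented rack X = {a ∈ A : s(a) = 1} with action x^g = g⁻¹·(x·g) and augmentation t|_X, and an augmented rack π : X → G is sent to the group-like graph with arrow set G × X, s(h,x) = h, t(h,x) = h π(x), g·(h,x) = (gh, x), (h,x)·g = (hg, x^g). -/
open CategoryTheory

universe u

/-- A group-like graph: a group `G` of vertices, a set `A` of arrows with source and
target maps `s, t : A → G`, and commuting left and right `G`-actions on `A` for which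
`s` and `t` are equivariant. -/
structure GLGraph : Type (u + 1) where
  G : Type u
  [grp : Group G]
  A : Type u
  s : A → G
  t : A → G
  lact : G → A → A
  ract : A → G → A
  one_lact : ∀ a, lact 1 a = a
  mul_lact : ∀ (g h : G) (a : A), lact (g * h) a = lact g (lact h a)
  ract_one : ∀ a, ract a 1 = a
  ract_mul : ∀ (a : A) (g h : G), ract a (g * h) = ract (ract a g) h
  lact_ract : ∀ (g : G) (a : A) (h : G), lact g (ract a h) = ract (lact g a) h
  s_lact : ∀ (g : G) (a : A), s (lact g a) = g * s a
  t_lact : ∀ (g : G) (a : A), t (lact g a) = g * t a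
  s_ract : ∀ (a : A) (g : G), s (ract a g) = s a * g
  t_ract : ∀ (a : A) (g : G), t (ract a g) = t a * g

attribute [instance] GLGraph.grp

/-- A morphism of group-like graphs. -/
@[ext]
structure GLGraphHom (Q Q' : GLGraph.{u}) where
  f0 : Q.G →* Q'.G
  f1 : Q.A → Q'.A
  s_comm : ∀ a, Q'.s (f1 a) = f0 (Q.s a)
  t_comm : ∀ a, Q'.t (f1 a) = f0 (Q.t a)
  lact_comm : ∀ (g : Q.G) (a : Q.A), f1 (Q.lact g a) = Q'.lact (f0 g) (f1 a)
  ract_comm : ∀ (a : Q.A) (g : Q.G), f1 (Q.ract a g) = Q'.ract (f1 a) (f0 g)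

/-- The category of group-like graphs. -/
instance : Category GLGraph.{u} where
  Hom := GLGraphHom
  id Q :=
    { f0 := MonoidHom.id _
      f1 := id
      s_comm := fun _ => rfl
      t_comm := fun _ => rfl
      lact_comm := fun _ _ => rfl
      ract_comm := fun _ _ => rfl }
  comp {Q Q' Q''} f g :=
    { f0 := g.f0.comp f.f0
      f1 := g.f1 ∘ f.f1
      s_comm := fun a => by simp [g.s_comm, f.s_comm]
      t_comm := fun a => by simp [g.t_comm, f.t_comm]
      lact_comm := fun gg a => by simp [f.lact_comm, g.lact_comm]
      ract_comm := fun a gg => by simp [f.ract_comm, g.ract_comm] }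
  id_comp f := by apply GLGraphHom.ext <;> rfl
  comp_id f := by apply GLGraphHom.ext <;> rfl
  assoc f g h := by apply GLGraphHom.ext <;> rfl

/-- An augmented rack: a right `G`-action on a set `X` together with an equivariant
map `π : X → G`, where `G` acts on itself by conjugation. -/
structure AugRack : Type (u + 1) where
  G : Type u
  [grp : Group G]
  X : Type u
  act : X → G → X
  act_one : ∀ x, act x 1 = x
  act_mul : ∀ (x : X) (g h : G), act (act x g) h = act x (g * h)
  π : X → G
  π_act : ∀ (x : X) (g : G), π (act x g) = g⁻¹ * π x * g

attribute [instance] AugRack.grp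

/-- A morphism of augmented racks. -/
@[ext]
structure AugRackHom (R R' : AugRack.{u}) where
  fX : R.X → R'.X
  fG : R.G →* R'.G
  π_comm : ∀ x, R'.π (fX x) = fG (R.π x)
  act_comm : ∀ (x : R.X) (g : R.G), R'.act (fX x) (fG g) = fX (R.act x g)

/-- The category of augmented racks. -/
instance : Category AugRack.{u} where
  Hom := AugRackHom
  id R :=
    { fX := id
      fG := MonoidHom.id _
      π_comm := fun _ => rfl
      act_comm := fun _ _ => rfl }
  comp {R R' R''} f g :=
    { fX := g.fX ∘ f.fX
      fG := g.fG.comp f.fG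
      π_comm := fun x => by simp [g.π_comm, f.π_comm]
      act_comm := fun x gg => by simp [g.act_comm, f.act_comm] }
  id_comp f := by apply AugRackHom.ext <;> rfl
  comp_id f := by apply AugRackHom.ext <;> rfl
  assoc f g h := by apply AugRackHom.ext <;> rfl

/-- The functor sending a group-like graph `(G, A, s, t)` to the augmented rack
`X = {a ∈ A : s a = 1}` with action `x ^ g = g⁻¹ · (x · g)` and augmentation `t|_X`. -/
def toRack : GLGraph.{u} ⥤ AugRack.{u} where
  obj Q :=
    { G := Q.G
      X := { a : Q.A // Q.s a = 1 }
      act := fun x g =>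
        ⟨Q.lact g⁻¹ (Q.ract x.1 g), by
          rw [Q.s_lact, Q.s_ract, x.2, one_mul, inv_mul_cancel]⟩
      act_one := fun x => by
        apply Subtype.ext
        simp [Q.ract_one, Q.one_lact]
      act_mul := fun x g h => by
        apply Subtype.ext
        show Q.lact h⁻¹ (Q.ract (Q.lact g⁻¹ (Q.ract x.1 g)) h) = _
        rw [← Q.lact_ract, ← Q.ract_mul, ← Q.mul_lact, ← mul_inv_rev]
      π := fun x => Q.t x.1
      π_act := fun x g => by
        show Q.t (Q.lact g⁻¹ (Q.ract x.1 g)) = _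
        rw [Q.t_lact, Q.t_ract, mul_assoc] }
  map {Q Q'} f :=
    { fX := fun x => ⟨f.f1 x.1, by rw [f.s_comm, x.2, map_one]⟩
      fG := f.f0
      π_comm := fun x => f.t_comm x.1
      act_comm := fun x g => by
        apply Subtype.ext
        show Q'.lact (f.f0 g)⁻¹ (Q'.ract (f.f1 x.1) (f.f0 g)) = _
        rw [← map_inv, ← f.ract_comm, ← f.lact_comm] }
  map_id Q := by
    apply AugRackHom.ext
    · funext x; apply Subtype.ext; rfl
    · rfl
  map_comp f g := by
    apply AugRackHom.ext
    · funext x; apply Subtype.ext; rfl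
    · rfl

/-- The functor sending an augmented rack `π : X → G` to the group-like graph with
arrows `G × X`, `s (h, x) = h`, `t (h, x) = h * π x`, `g · (h, x) = (g h, x)` and
`(h, x) · g = (h g, x ^ g)`. -/
def toGraph : AugRack.{u} ⥤ GLGraph.{u} where
  obj R :=
    { G := R.G
      A := R.G × R.X
      s := fun a => a.1
      t := fun a => a.1 * R.π a.2
      lact := fun g a => (g * a.1, a.2)
      ract := fun a g => (a.1 * g, R.act a.2 g)
      one_lact := fun a => by simp
      mul_lact := fun g h a => by simp [mul_assoc]
      ract_one := fun a => by simp [R.act_one]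
      ract_mul := fun a g h => by simp [R.act_mul, mul_assoc]
      lact_ract := fun g a h => by simp [mul_assoc]
      s_lact := fun g a => rfl
      t_lact := fun g a => by simp [mul_assoc]
      s_ract := fun a g => rfl
      t_ract := fun a g => by
        show a.1 * g * R.π (R.act a.2 g) = a.1 * R.π a.2 * g
        rw [R.π_act]; group }
  map {R R'} f :=
    { f0 := f.fG
      f1 := fun a => (f.fG a.1, f.fX a.2)
      s_comm := fun a => rfl
      t_comm := fun a => by
        show f.fG a.1 * R'.π (f.fX a.2) = f.fG (a.1 * R.π a.2)
        rw [f.π_comm, map_mul]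
      lact_comm := fun g a => by
        show (f.fG (g * a.1), f.fX a.2) = (f.fG g * f.fG a.1, f.fX a.2)
        rw [map_mul]
      ract_comm := fun a g => by
        show (f.fG (a.1 * g), f.fX (R.act a.2 g)) = (f.fG a.1 * f.fG g, _)
        rw [map_mul, f.act_comm] }
  map_id R := by
    apply GLGraphHom.ext
    · rfl
    · funext a; rfl
  map_comp f g := by
    apply GLGraphHom.ext
    · rfl
    · funext a; rfl

lemma aux_t (Q : GLGraph.{u}) (h : Q.G) (x : Q.A) :
    Q.t (Q.lact h x) = h * Q.t x := Q.t_lact h x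

lemma aux_lact (Q : GLGraph.{u}) (g h : Q.G) (x : Q.A) :
    Q.lact (g * h) x = Q.lact g (Q.lact h x) := Q.mul_lact g h x

lemma aux_ract (Q : GLGraph.{u}) (h : Q.G) (x : Q.A) (g : Q.G) :
    Q.lact (h * g) (Q.lact g⁻¹ (Q.ract x g)) = Q.ract (Q.lact h x) g := by
  rw [Q.mul_lact, ← Q.mul_lact g, mul_inv_cancel, Q.one_lact, Q.lact_ract]

/-- The unit isomorphism at an object. -/
def unitIsoApp (Q : GLGraph.{u}) : Q ≅ (toRack ⋙ toGraph).obj Q where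
  hom :=
    { f0 := MonoidHom.id _
      f1 := fun a => (Q.s a, ⟨Q.lact (Q.s a)⁻¹ a, by rw [Q.s_lact, inv_mul_cancel]⟩)
      s_comm := fun a => rfl
      t_comm := fun a => by
        show Q.s a * Q.t (Q.lact (Q.s a)⁻¹ a) = Q.t a
        rw [Q.t_lact, ← mul_assoc, mul_inv_cancel, one_mul]
      lact_comm := fun g a => by
        refine Prod.ext (Q.s_lact g a) (Subtype.ext ?_)
        show Q.lact (Q.s (Q.lact g a))⁻¹ (Q.lact g a) = Q.lact (Q.s a)⁻¹ a
        rw [Q.s_lact, mul_inv_rev, Q.mul_lact, ← Q.mul_lact g⁻¹, inv_mul_cancel,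
          Q.one_lact]
      ract_comm := fun a g => by
        refine Prod.ext (Q.s_ract a g) (Subtype.ext ?_)
        show Q.lact (Q.s (Q.ract a g))⁻¹ (Q.ract a g)
          = Q.lact g⁻¹ (Q.ract (Q.lact (Q.s a)⁻¹ a) g)
        rw [Q.s_ract, mul_inv_rev, Q.mul_lact, ← Q.lact_ract] }
  inv :=
    { f0 := MonoidHom.id _
      f1 := fun p => Q.lact p.1 p.2.1
      s_comm := fun p => by
        obtain ⟨h, x, hx⟩ := p
        show Q.s (Q.lact h x) = h
        rw [Q.s_lact h x, hx, mul_one (M := Q.G) h]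
      t_comm := fun p => aux_t Q p.1 p.2.1
      lact_comm := fun g p => aux_lact Q g p.1 p.2.1
      ract_comm := fun p g => aux_ract Q p.1 p.2.1 g }
  hom_inv_id := by
    apply GLGraphHom.ext
    · rfl
    · funext a
      show Q.lact (Q.s a) (Q.lact (Q.s a)⁻¹ a) = a
      rw [← Q.mul_lact, mul_inv_cancel, Q.one_lact]
  inv_hom_id := by
    apply GLGraphHom.ext
    · rfl
    · funext p
      refine Prod.ext ?_ (Subtype.ext ?_)
      · show Q.s (Q.lact p.1 p.2.1) = p.1
        rw [Q.s_lact p.1 p.2.1, p.2.2, mul_one (M := Q.G) p.1]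
      · show Q.lact (Q.s (Q.lact p.1 p.2.1))⁻¹ (Q.lact p.1 p.2.1) = p.2.1
        rw [Q.s_lact p.1 p.2.1, p.2.2, mul_one (M := Q.G) p.1, ← Q.mul_lact (p.1 : Q.G)⁻¹ p.1 p.2.1,
          inv_mul_cancel (G := Q.G) p.1, Q.one_lact p.2.1]

/-- The counit isomorphism at an object. -/
def counitIsoApp (R : AugRack.{u}) : (toGraph ⋙ toRack).obj R ≅ R where
  hom :=
    { fX := fun p => p.1.2
      fG := MonoidHom.id _
      π_comm := fun p => by
        obtain ⟨⟨h, x⟩, hp⟩ := p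
        show R.π x = h * R.π x
        rw [show h = 1 from hp, one_mul]
      act_comm := fun p g => rfl }
  inv :=
    { fX := fun x => ⟨(1, x), rfl⟩
      fG := MonoidHom.id _
      π_comm := fun x => (one_mul _)
      act_comm := fun x g => by
        apply Subtype.ext
        show (g⁻¹ * (1 * g), R.act x g) = (1, R.act x g)
        rw [one_mul, inv_mul_cancel] }
  hom_inv_id := by
    apply AugRackHom.ext
    · funext p
      refine Subtype.ext (Prod.ext ?_ rfl)
      exact p.2.symm
    · rfl
  inv_hom_id := by
    apply AugRackHom.ext
    · rfl
    · rfl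

/-- The category of group-like graphs is equivalent to the category of
augmented racks, via the functor `toRack` sending a group-like graph `(G, A, s, t)` to
the augmented rack `{a ∈ A : s a = 1}` (with `x ^ g = g⁻¹ · (x · g)` and augmentation
`t`), with inverse the functor `toGraph` sending an augmented rack `π : X → G` to the
group-like graph on `G × X` described above. -/
theorem groupLikeGraphs_equivalent_to_augmentedRacks :
    ∃ e : GLGraph.{u} ≌ AugRack.{u},
      e.functor = toRack ∧ e.inverse = toGraph := by
  refine ⟨CategoryTheory.Equivalence.mk toRack toGraph
    (NatIso.ofComponents unitIsoApp ?_) (NatIso.ofComponents counitIsoApp ?_),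
    rfl, rfl⟩
  · intro Q Q' f
    apply GLGraphHom.ext
    · rfl
    · funext a
      refine Prod.ext ?_ (Subtype.ext ?_)
      · exact f.s_comm a
      show Q'.lact (Q'.s (f.f1 a))⁻¹ (f.f1 a) = f.f1 (Q.lact (Q.s a)⁻¹ a)
      rw [f.s_comm, f.lact_comm, map_inv]
  · intro R R' f
    apply AugRackHom.ext
    · rfl
    · rfl
end

section
/- Let (G, A, s, t) be a group-like graph and let X := {a ∈ A : s(a) = 1}. For x ∈ X and g ∈ G set x^g := g⁻¹·(x·g). Then: (i) s(x^g) = 1, so x^g ∈ X; (ii) this defines a right G-action on X, i.e. x^1 = x and (x^g)^h = x^{g h}; (iii) t(x^g) = g⁻¹ t(x) g. In particular, the restriction of t to X makes X an augmented rack over G. -/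
/-- Let `(G, A, s, t)` be a group-like graph (with commuting left and
right `G`-actions on `A` and equivariant source/target maps), and let
`X := {a : A // s a = 1}`.  For `x ∈ X` and `g ∈ G` set `x ^ g := g⁻¹ · (x · g)`.
Then (i) `s (x ^ g) = 1`, so `x ^ g ∈ X`; (ii) this is a right `G`-action on `X`;
(iii) `t (x ^ g) = g⁻¹ * t x * g`.  In particular `t|_X` makes `X` an augmented rack
over `G`. -/
theorem groupLikeGraph_to_augmentedRack
    {G : Type*} [Group G] {A : Type*}
    (s t : A → G) (lact : G → A → A) (ract : A → G → A)
    (one_lact : ∀ a, lact 1 a = a)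
    (mul_lact : ∀ (g h : G) (a : A), lact (g * h) a = lact g (lact h a))
    (ract_one : ∀ a, ract a 1 = a)
    (ract_mul : ∀ (a : A) (g h : G), ract a (g * h) = ract (ract a g) h)
    (lact_ract : ∀ (g : G) (a : A) (h : G), lact g (ract a h) = ract (lact g a) h)
    (s_lact : ∀ (g : G) (a : A), s (lact g a) = g * s a)
    (t_lact : ∀ (g : G) (a : A), t (lact g a) = g * t a)
    (s_ract : ∀ (a : A) (g : G), s (ract a g) = s a * g)
    (t_ract : ∀ (a : A) (g : G), t (ract a g) = t a * g) :
    let X := { a : A // s a = 1 }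
    let conj : A → G → A := fun x g => lact g⁻¹ (ract x g)
    -- (i) `x ^ g` again lies in `X`
    (∀ (x : X) (g : G), s (conj x.1 g) = 1) ∧
    -- (ii) this defines a right `G`-action on `X`
    (∀ x : X, conj x.1 1 = x.1) ∧
    (∀ (x : X) (g h : G), conj (conj x.1 g) h = conj x.1 (g * h)) ∧
    -- (iii) the target map is equivariant for the conjugation action of `G` on itself,
    -- i.e. `t|_X : X → G` is an augmented rack
    (∀ (x : X) (g : G), t (conj x.1 g) = g⁻¹ * t x.1 * g) := by
  intro X conj
  refine ⟨?_, ?_, ?_, ?_⟩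
  · intro x g; simp [conj, s_lact, s_ract, x.2]
  · intro x; simp [conj, one_lact, ract_one]
  · intro x g h
    simp only [conj, ← lact_ract, ← ract_mul, ← mul_lact, mul_inv_rev]
  · intro x g; simp [conj, t_lact, t_ract, mul_assoc]
end

section
/- Let π : X → G be an augmented rack. On A := G × X, the formulas g·(h, x) := (g h, x), (h, x)·g := (h g, x^g), s(h, x) := h, t(h, x) := h π(x) define a group-like graph: the left formula is a left G-action, the right formula is a right G-action, the two actions commute, and s and t satisfy s(g·a) = g s(a), t(g·a) = g t(a), s(a·g) = s(a) g, t(a·g) = t(a) g for all g ∈ G and a ∈ A. -/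
/-- An augmented rack `π : X → G` gives rise to a group-like graph on
`A := G × X` with `s(h,x) = h`, `t(h,x) = h * π x`, `g·(h,x) = (g*h, x)` and
`(h,x)·g = (h*g, x^g)`: the left formula is a left `G`-action, the right formula is a
right `G`-action, the two actions commute, and `s`, `t` are suitably equivariant. -/
theorem augmentedRack_to_groupLikeGraph
    {G : Type*} [Group G] {X : Type*}
    (act : X → G → X)
    (act_one : ∀ x, act x 1 = x)
    (act_mul : ∀ (x : X) (g h : G), act (act x g) h = act x (g * h))
    (π : X → G)
    (π_act : ∀ (x : X) (g : G), π (act x g) = g⁻¹ * π x * g) :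
    let A := G × X
    let s : A → G := fun a => a.1
    let t : A → G := fun a => a.1 * π a.2
    let lact : G → A → A := fun g a => (g * a.1, a.2)
    let ract : A → G → A := fun a g => (a.1 * g, act a.2 g)
    -- the left formula is a left action
    ((∀ a, lact 1 a = a) ∧
      (∀ (g h : G) (a : A), lact (g * h) a = lact g (lact h a))) ∧
    -- the right formula is a right action
    ((∀ a, ract a 1 = a) ∧
      (∀ (a : A) (g h : G), ract a (g * h) = ract (ract a g) h)) ∧
    -- the two actions commute
    (∀ (g : G) (a : A) (h : G), lact g (ract a h) = ract (lact g a) h) ∧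
    -- equivariance of the source and target maps
    ((∀ (g : G) (a : A), s (lact g a) = g * s a) ∧
      (∀ (g : G) (a : A), t (lact g a) = g * t a) ∧
      (∀ (a : A) (g : G), s (ract a g) = s a * g) ∧
      (∀ (a : A) (g : G), t (ract a g) = t a * g)) := by
  refine ⟨⟨fun a => by simp, fun g h a => by simp [mul_assoc]⟩,
    ⟨fun a => by simp [act_one], fun a g h => by simp [act_mul, mul_assoc]⟩,
    fun g a h => by simp [mul_assoc],
    ⟨fun g a => rfl, fun g a => by simp [mul_assoc],
      fun a g => rfl, fun a g => by simp [π_act, mul_assoc]⟩⟩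
end

section
/- Let π : X → G be an augmented rack such that the subgroup of G generated by π(X) is all of G. Then for every n ≥ 0, the k-linear span of the set { v₁ · (of(g · π(x)) − of(g)) · v₂ : g ∈ G, x ∈ X, p + q = n, v₁ ∈ I^p, v₂ ∈ I^q } equals I^{n+1} as k-submodules of k[G]. (This is the identity φ(Iⁿ(A)) = I^{n+1}(G) for a path-connected group-like graph.) -/
noncomputable section

def aug (k : Type*) [Field k] (G : Type*) [Group G] :
    MonoidAlgebra k G →ₐ[k] k :=
  MonoidAlgebra.lift k k G 1

def augPow (k : Type*) [Field k] (G : Type*) [Group G] :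
    ℕ → Submodule k (MonoidAlgebra k G)
  | 0 => ⊤
  | n + 1 => LinearMap.ker (aug k G).toLinearMap * augPow k G n

section Aux

variable {k : Type*} [Field k] {G : Type*} [Group G]

lemma aug_single (g : G) (c : k) : aug k G (MonoidAlgebra.single g c) = c := by
  simp [aug, MonoidAlgebra.lift_single]

lemma aug_of (g : G) : aug k G (MonoidAlgebra.of k G g) = 1 := by
  simpa using aug_single g (1 : k)

lemma sub_mem_ker (g h : G) :
    MonoidAlgebra.of k G g - MonoidAlgebra.of k G h ∈
      LinearMap.ker (aug k G).toLinearMap := by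
  rw [LinearMap.mem_ker, AlgHom.toLinearMap_apply, map_sub, aug_of, aug_of, sub_self]

lemma augPow_left_ideal (q : ℕ) (a m : MonoidAlgebra k G) (hm : m ∈ augPow k G q) :
    a * m ∈ augPow k G q := by
  induction q generalizing m with
  | zero => exact Submodule.mem_top
  | succ q ih =>
    refine Submodule.mul_induction_on hm (fun i hi v hv => ?_) (fun x y hx hy => ?_)
    · rw [← mul_assoc]
      refine Submodule.mul_mem_mul ?_ hv
      rw [LinearMap.mem_ker, AlgHom.toLinearMap_apply] at hi ⊢
      rw [map_mul, hi, mul_zero]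
    · rw [mul_add]; exact add_mem hx hy

lemma top_mul_augPow (q : ℕ) :
    (⊤ : Submodule k (MonoidAlgebra k G)) * augPow k G q = augPow k G q := by
  refine le_antisymm (Submodule.mul_le.2 fun a _ m hm => augPow_left_ideal q a m hm) ?_
  intro m hm
  simpa using Submodule.mul_mem_mul (Submodule.mem_top (x := (1 : MonoidAlgebra k G))) hm

lemma augPow_mul (p q : ℕ) : augPow k G p * augPow k G q = augPow k G (p + q) := by
  induction p with
  | zero => simpa [augPow] using top_mul_augPow q
  | succ p ih =>
    show (LinearMap.ker (aug k G).toLinearMap * augPow k G p) * augPow k G q = _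
    rw [mul_assoc, ih, show p + 1 + q = (p + q) + 1 from by omega]
    rfl

lemma ker_le_span_sub_one :
    LinearMap.ker (aug k G).toLinearMap ≤
      Submodule.span k {w : MonoidAlgebra k G | ∃ g : G, w = MonoidAlgebra.of k G g - 1} := by
  intro v hv
  rw [LinearMap.mem_ker, AlgHom.toLinearMap_apply] at hv
  have h1 : (∑ g ∈ v.coeff.support, v.coeff g • (MonoidAlgebra.of k G g : MonoidAlgebra k G)) = v := by
    conv_rhs => rw [← MonoidAlgebra.sum_coeff_single v]
    rw [Finsupp.sum]
    refine Finset.sum_congr rfl fun g _ => ?_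
    simp [MonoidAlgebra.of_apply, MonoidAlgebra.smul_single']
  have h2 : (∑ g ∈ v.coeff.support, v.coeff g) = 0 := by
    calc (∑ g ∈ v.coeff.support, v.coeff g) = aug k G v := by
          conv_rhs => rw [← h1]
          rw [map_sum]
          refine Finset.sum_congr rfl fun g _ => ?_
          rw [map_smul, aug_of, smul_eq_mul, mul_one]
      _ = 0 := hv
  have hv' : v = ∑ g ∈ v.coeff.support, v.coeff g • (MonoidAlgebra.of k G g - 1) := by
    calc v = ∑ g ∈ v.coeff.support, v.coeff g • (MonoidAlgebra.of k G g : MonoidAlgebra k G)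
            - (∑ g ∈ v.coeff.support, v.coeff g) • (1 : MonoidAlgebra k G) := by
          rw [h1, h2, zero_smul, sub_zero]
      _ = ∑ g ∈ v.coeff.support, v.coeff g • (MonoidAlgebra.of k G g - 1) := by
          rw [Finset.sum_smul, ← Finset.sum_sub_distrib]
          exact Finset.sum_congr rfl fun g _ => (smul_sub _ _ _).symm
  rw [hv']
  exact Submodule.sum_mem _ fun g _ =>
    Submodule.smul_mem _ _ (Submodule.subset_span ⟨g, rfl⟩)

end Aux

/-- Let `π : X → G` be an augmented rack such that the subgroup of `G`
generated by `π(X)` is all of `G` (i.e. the corresponding group-like graph is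
path-connected).  Then for every `n ≥ 0` the `k`-span of
`{ v₁ * (of (g * π x) - of g) * v₂ : g ∈ G, x ∈ X, p + q = n, v₁ ∈ Iᵖ, v₂ ∈ I^q }`
equals `I^(n+1)`; this is the identity `φ(Iⁿ(A)) = I^(n+1)(G)`. -/
theorem augmentedRack_phi_augPow_eq
    {k : Type*} [Field k] [CharZero k] {G : Type*} [Group G] {X : Type*}
    (act : X → G → X)
    (act_one : ∀ x, act x 1 = x)
    (act_mul : ∀ (x : X) (g h : G), act (act x g) h = act x (g * h))
    (π : X → G)
    (π_act : ∀ (x : X) (g : G), π (act x g) = g⁻¹ * π x * g)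
    (hgen : Subgroup.closure (Set.range π) = ⊤)
    (n : ℕ) :
    Submodule.span k
        {w : MonoidAlgebra k G |
          ∃ (g : G) (x : X) (p q : ℕ), p + q = n ∧
            ∃ v₁ ∈ augPow k G p, ∃ v₂ ∈ augPow k G q,
              w = v₁ * (MonoidAlgebra.of k G (g * π x) - MonoidAlgebra.of k G g) * v₂} =
      augPow k G (n + 1) := by
  set I := LinearMap.ker (aug k G).toLinearMap with hI
  set J : Submodule k (MonoidAlgebra k G) :=
    Submodule.span k {w : MonoidAlgebra k G |
      ∃ (g : G) (x : X), w = MonoidAlgebra.of k G g * (MonoidAlgebra.of k G (π x) - 1)} with hJ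
  have hJmul : ∀ (a : G) (u : MonoidAlgebra k G), u ∈ J → MonoidAlgebra.of k G a * u ∈ J := by
    intro a u hu
    induction hu using Submodule.span_induction with
    | mem w hw =>
      obtain ⟨g, x, rfl⟩ := hw
      rw [← mul_assoc, ← map_mul]
      exact Submodule.subset_span ⟨a * g, x, rfl⟩
    | zero => simpa using zero_mem J
    | add x y _ _ hx hy => rw [mul_add]; exact add_mem hx hy
    | smul c x _ hx => rw [mul_smul_comm]; exact Submodule.smul_mem _ _ hx
  have hsub : ∀ g : G, MonoidAlgebra.of k G g - 1 ∈ J := by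
    intro g
    have hg : g ∈ Subgroup.closure (Set.range π) := hgen ▸ Subgroup.mem_top g
    induction hg using Subgroup.closure_induction with
    | mem s hs =>
      obtain ⟨x, rfl⟩ := hs
      have h : MonoidAlgebra.of k G (π x) - 1
          = MonoidAlgebra.of k G 1 * (MonoidAlgebra.of k G (π x) - 1) := by
        rw [map_one, one_mul]
      rw [h]
      exact Submodule.subset_span ⟨1, x, rfl⟩
    | one =>
      rw [map_one, sub_self]; exact zero_mem J
    | mul a b _ _ ha hb =>
      have h : MonoidAlgebra.of k G (a * b) - 1
          = MonoidAlgebra.of k G a * (MonoidAlgebra.of k G b - 1)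
            + (MonoidAlgebra.of k G a - 1) := by
        rw [map_mul, mul_sub, mul_one]; abel
      rw [h]
      exact add_mem (hJmul a _ hb) ha
    | inv a _ ha =>
      have h : MonoidAlgebra.of k G a⁻¹ - 1
          = -(MonoidAlgebra.of k G a⁻¹ * (MonoidAlgebra.of k G a - 1)) := by
        rw [mul_sub, mul_one, ← map_mul, inv_mul_cancel, map_one, neg_sub]
      rw [h]
      exact neg_mem (hJmul a⁻¹ _ ha)
  have hIJ : I ≤ J := by
    refine le_trans ker_le_span_sub_one (Submodule.span_le.2 ?_)
    rintro w ⟨g, rfl⟩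
    exact hsub g
  apply le_antisymm
  · rw [Submodule.span_le]
    rintro w ⟨g, x, p, q, hpq, v₁, hv₁, v₂, hv₂, rfl⟩
    have hd : MonoidAlgebra.of k G (g * π x) - MonoidAlgebra.of k G g ∈ I := sub_mem_ker _ _
    have hmem : v₁ * ((MonoidAlgebra.of k G (g * π x) - MonoidAlgebra.of k G g) * v₂)
        ∈ augPow k G p * augPow k G (q + 1) :=
      Submodule.mul_mem_mul hv₁ (Submodule.mul_mem_mul hd hv₂)
    rw [augPow_mul, show p + (q + 1) = n + 1 from by omega] at hmem
    rw [mul_assoc]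
    exact hmem
  · show augPow k G (n + 1) ≤ _
    change I * augPow k G n ≤ _
    refine Submodule.mul_le.2 fun v hv w hw => ?_
    have hvJ : v ∈ J := hIJ hv
    clear hv
    induction hvJ using Submodule.span_induction with
    | mem u hu =>
      obtain ⟨g, x, rfl⟩ := hu
      refine Submodule.subset_span ⟨g, x, 0, n, by omega, 1, Submodule.mem_top, w, hw, ?_⟩
      rw [one_mul, map_mul, mul_sub, mul_one]
    | zero => simpa using zero_mem _
    | add a b _ _ ha hb => rw [add_mul]; exact add_mem ha hb
    | smul c a _ ha => rw [smul_mul_assoc]; exact Submodule.smul_mem _ _ ha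

end
end
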